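/- Let F(φ) = Σ_{k=0}^∞ h_k(x(φ), γ, τ) with x(φ) = −(λ/24)Σ_n φ_n⁴ and h_k as defined via the γ-regularized coefficients. Then for fixed φ, lim_{γ→0⁺} Σ_k h_k(x,γ,τ) = e^x, uniformly for x in any compact set, and the limit is independent of τ > -2. -/

import Mathlib

open MeasureTheory Real Set

noncomputable def hcoef (x γ τ : ℝ) (k : ℕ) : ℝ :=
  x ^ k / (k.factorial : ℝ) *
    (2 * ∫ t in Ioi (0 : ℝ), t ^ (τ + 4 * k + 1) * Real.exp (-t ^ 2 - γ * t ^ 6)) /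
    Real.Gamma ((τ + 4 * k + 2) / 2)

namespace Stmt15Aux

variable {τ : ℝ}

lemma hs_lt (hτ : -2 < τ) (k : ℕ) : (-1 : ℝ) < τ + 4 * k + 1 := by
  have : (0 : ℝ) ≤ (k : ℝ) := Nat.cast_nonneg k
  linarith

lemma meas_integrand (γ : ℝ) (k : ℕ) :
    AEStronglyMeasurable (fun t : ℝ => t ^ (τ + 4 * k + 1) * Real.exp (-t ^ 2 - γ * t ^ 6))
      (volume.restrict (Ioi (0 : ℝ))) := by
  refine ContinuousOn.aestronglyMeasurable ?_ measurableSet_Ioi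
  refine ContinuousOn.mul ?_ ?_
  · exact ContinuousOn.rpow_const continuousOn_id (fun t ht => Or.inl (ne_of_gt ht))
  · exact (Real.continuous_exp.comp (by continuity)).continuousOn

lemma integrable_bound (hτ : -2 < τ) (k : ℕ) :
    IntegrableOn (fun t : ℝ => t ^ (τ + 4 * k + 1) * Real.exp (-t ^ 2)) (Ioi (0 : ℝ)) := by
  have h := integrableOn_rpow_mul_exp_neg_rpow (hs_lt hτ k) (two_pos (α := ℝ))
  refine h.congr_fun (fun t ht => ?_) measurableSet_Ioi
  dsimp only
  rw [show ((2 : ℝ)) = ((2 : ℕ) : ℝ) by norm_num, Real.rpow_natCast]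

lemma bound_ptwise {γ : ℝ} (hγ : 0 ≤ γ) (k : ℕ) {t : ℝ} (ht : t ∈ Ioi (0 : ℝ)) :
    ‖t ^ (τ + 4 * k + 1) * Real.exp (-t ^ 2 - γ * t ^ 6)‖ ≤
      t ^ (τ + 4 * k + 1) * Real.exp (-t ^ 2) := by
  have ht' : (0 : ℝ) < t := ht
  have h1 : (0 : ℝ) ≤ t ^ (τ + 4 * k + 1) := Real.rpow_nonneg ht'.le _
  rw [Real.norm_eq_abs, abs_mul, abs_of_nonneg h1, abs_of_pos (Real.exp_pos _)]
  refine mul_le_mul_of_nonneg_left ?_ h1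
  apply Real.exp_le_exp.mpr
  have : 0 ≤ γ * t ^ 6 := mul_nonneg hγ (by positivity)
  linarith

lemma integrableOn_integrand (hτ : -2 < τ) {γ : ℝ} (hγ : 0 ≤ γ) (k : ℕ) :
    IntegrableOn (fun t : ℝ => t ^ (τ + 4 * k + 1) * Real.exp (-t ^ 2 - γ * t ^ 6))
      (Ioi (0 : ℝ)) := by
  refine Integrable.mono' (integrable_bound hτ k) (meas_integrand γ k) ?_
  rw [ae_restrict_iff' measurableSet_Ioi]
  exact Filter.Eventually.of_forall fun t ht => bound_ptwise hγ k ht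

lemma integral_zero_eq (hτ : -2 < τ) (k : ℕ) :
    ∫ t in Ioi (0 : ℝ), t ^ (τ + 4 * k + 1) * Real.exp (-t ^ 2) =
      Real.Gamma ((τ + 4 * k + 2) / 2) / 2 := by
  have h := integral_rpow_mul_exp_neg_rpow (two_pos (α := ℝ)) (hs_lt hτ k)
  have h2 : ∫ t in Ioi (0 : ℝ), t ^ (τ + 4 * k + 1) * Real.exp (-t ^ 2) =
      ∫ t in Ioi (0 : ℝ), t ^ (τ + 4 * k + 1) * Real.exp (-t ^ ((2 : ℝ))) := by
    refine setIntegral_congr_fun measurableSet_Ioi (fun t ht => ?_)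
    rw [show ((2 : ℝ)) = ((2 : ℕ) : ℝ) by norm_num, Real.rpow_natCast]
  rw [h2, h]
  ring_nf

lemma gamma_pos (hτ : -2 < τ) (k : ℕ) : 0 < Real.Gamma ((τ + 4 * k + 2) / 2) := by
  apply Real.Gamma_pos_of_pos
  have : (0 : ℝ) ≤ (k : ℝ) := Nat.cast_nonneg k
  linarith

lemma integral_nonneg' (γ : ℝ) (k : ℕ) :
    0 ≤ ∫ t in Ioi (0 : ℝ), t ^ (τ + 4 * k + 1) * Real.exp (-t ^ 2 - γ * t ^ 6) := by
  refine setIntegral_nonneg measurableSet_Ioi (fun t ht => ?_)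
  exact mul_nonneg (Real.rpow_nonneg (le_of_lt ht) _) (Real.exp_pos _).le

lemma integral_le (hτ : -2 < τ) {γ : ℝ} (hγ : 0 ≤ γ) (k : ℕ) :
    ∫ t in Ioi (0 : ℝ), t ^ (τ + 4 * k + 1) * Real.exp (-t ^ 2 - γ * t ^ 6) ≤
      Real.Gamma ((τ + 4 * k + 2) / 2) / 2 := by
  rw [← integral_zero_eq hτ k]
  refine setIntegral_mono_on (integrableOn_integrand hτ hγ k) (integrable_bound hτ k)
    measurableSet_Ioi (fun t ht => ?_)
  have := bound_ptwise (τ := τ) hγ k ht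
  calc _ ≤ ‖t ^ (τ + 4 * k + 1) * Real.exp (-t ^ 2 - γ * t ^ 6)‖ := le_norm_self _
    _ ≤ _ := this

-- ratio form
lemma hcoef_eq (x γ : ℝ) (k : ℕ) :
    hcoef x γ τ k = x ^ k / (k.factorial : ℝ) *
      ((2 * ∫ t in Ioi (0 : ℝ), t ^ (τ + 4 * k + 1) * Real.exp (-t ^ 2 - γ * t ^ 6)) /
        Real.Gamma ((τ + 4 * k + 2) / 2)) := by
  rw [hcoef, mul_div_assoc]

lemma ratio_nonneg (hτ : -2 < τ) (γ : ℝ) (k : ℕ) :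
    0 ≤ (2 * ∫ t in Ioi (0 : ℝ), t ^ (τ + 4 * k + 1) * Real.exp (-t ^ 2 - γ * t ^ 6)) /
      Real.Gamma ((τ + 4 * k + 2) / 2) :=
  div_nonneg (by linarith [integral_nonneg' (τ := τ) γ k]) (gamma_pos hτ k).le

lemma ratio_le_one (hτ : -2 < τ) {γ : ℝ} (hγ : 0 ≤ γ) (k : ℕ) :
    (2 * ∫ t in Ioi (0 : ℝ), t ^ (τ + 4 * k + 1) * Real.exp (-t ^ 2 - γ * t ^ 6)) /
      Real.Gamma ((τ + 4 * k + 2) / 2) ≤ 1 := by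
  rw [div_le_one (gamma_pos hτ k)]
  have := integral_le hτ hγ k
  linarith

lemma key_bound (hτ : -2 < τ) {γ : ℝ} (hγ : 0 ≤ γ) {x M : ℝ} (hM : 0 ≤ M)
    (hxM : |x| ≤ M) (k : ℕ) :
    |x ^ k / (k.factorial : ℝ) - hcoef x γ τ k| ≤
      M ^ k / (k.factorial : ℝ) - hcoef M γ τ k := by
  set ρ := (2 * ∫ t in Ioi (0 : ℝ), t ^ (τ + 4 * k + 1) * Real.exp (-t ^ 2 - γ * t ^ 6)) /
      Real.Gamma ((τ + 4 * k + 2) / 2) with hρ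
  have h0 : 0 ≤ ρ := ratio_nonneg hτ γ k
  have h1 : ρ ≤ 1 := ratio_le_one hτ hγ k
  rw [hcoef_eq, hcoef_eq, ← hρ]
  have hfac : (0 : ℝ) < (k.factorial : ℝ) := by positivity
  have heq : x ^ k / (k.factorial : ℝ) - x ^ k / (k.factorial : ℝ) * ρ =
      x ^ k / (k.factorial : ℝ) * (1 - ρ) := by ring
  rw [heq, abs_mul, abs_of_nonneg (by linarith : (0:ℝ) ≤ 1 - ρ)]
  have habs : |x ^ k / (k.factorial : ℝ)| = |x| ^ k / (k.factorial : ℝ) := by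
    rw [abs_div, abs_pow, abs_of_pos hfac]
  rw [habs]
  have hMk : |x| ^ k / (k.factorial : ℝ) ≤ M ^ k / (k.factorial : ℝ) :=
    div_le_div_of_nonneg_right (pow_le_pow_left₀ (abs_nonneg x) hxM k) hfac.le |>.trans_eq rfl
  nlinarith [mul_le_mul_of_nonneg_right hMk (by linarith : (0:ℝ) ≤ 1 - ρ)]

lemma hcoef_abs_le (hτ : -2 < τ) {γ : ℝ} (hγ : 0 ≤ γ) (x : ℝ) (k : ℕ) :
    |hcoef x γ τ k| ≤ |x| ^ k / (k.factorial : ℝ) := by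
  rw [hcoef_eq, abs_mul, abs_div, abs_pow, abs_of_pos (show (0:ℝ) < (k.factorial : ℝ) by positivity)]
  have h0 := ratio_nonneg hτ γ k
  have h1 := ratio_le_one hτ hγ k
  rw [abs_of_nonneg h0]
  calc |x| ^ k / (k.factorial : ℝ) * _ ≤ |x| ^ k / (k.factorial : ℝ) * 1 :=
        mul_le_mul_of_nonneg_left h1 (by positivity)
    _ = _ := mul_one _

lemma summable_hcoef (hτ : -2 < τ) {γ : ℝ} (hγ : 0 ≤ γ) (x : ℝ) :
    Summable (fun k => hcoef x γ τ k) := by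
  refine Summable.of_norm_bounded (Real.summable_pow_div_factorial |x|) (fun k => ?_)
  rw [Real.norm_eq_abs]
  exact hcoef_abs_le hτ hγ x k

lemma exp_tsum (x : ℝ) : Real.exp x = ∑' k : ℕ, x ^ k / (k.factorial : ℝ) := by
  rw [Real.exp_eq_exp_ℝ, NormedSpace.exp_eq_tsum_div]

lemma tendsto_integral (hτ : -2 < τ) (k : ℕ) :
    Filter.Tendsto
      (fun γ : ℝ => ∫ t in Ioi (0 : ℝ), t ^ (τ + 4 * k + 1) * Real.exp (-t ^ 2 - γ * t ^ 6))
      (nhdsWithin 0 (Ioi 0)) (nhds (Real.Gamma ((τ + 4 * k + 2) / 2) / 2)) := by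
  rw [← integral_zero_eq hτ k]
  refine tendsto_integral_filter_of_dominated_convergence
    (fun t : ℝ => t ^ (τ + 4 * k + 1) * Real.exp (-t ^ 2))
    (Filter.Eventually.of_forall fun γ => meas_integrand γ k) ?_ (integrable_bound hτ k) ?_
  · filter_upwards [self_mem_nhdsWithin] with γ hγ
    rw [ae_restrict_iff' measurableSet_Ioi]
    exact Filter.Eventually.of_forall fun t ht => bound_ptwise (le_of_lt hγ) k ht
  · refine Filter.Eventually.of_forall fun t => ?_
    have hc : Filter.Tendsto (fun γ : ℝ => t ^ (τ + 4 * k + 1) * Real.exp (-t ^ 2 - γ * t ^ 6))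
        (nhds 0) (nhds (t ^ (τ + 4 * k + 1) * Real.exp (-t ^ 2 - 0 * t ^ 6))) := by
      exact (Continuous.tendsto (by continuity) 0)
    simp only [zero_mul, sub_zero] at hc
    exact hc.mono_left nhdsWithin_le_nhds

lemma tendsto_hcoef (hτ : -2 < τ) (x : ℝ) (k : ℕ) :
    Filter.Tendsto (fun γ : ℝ => hcoef x γ τ k) (nhdsWithin 0 (Ioi 0))
      (nhds (x ^ k / (k.factorial : ℝ))) := by
  have hΓ := gamma_pos hτ k
  have h := Filter.Tendsto.const_mul (x ^ k / (k.factorial : ℝ))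
    ((Filter.Tendsto.div_const (Filter.Tendsto.const_mul 2 (tendsto_integral hτ k))
      (Real.Gamma ((τ + 4 * k + 2) / 2))))
  have hval : x ^ k / (k.factorial : ℝ) *
      (2 * (Real.Gamma ((τ + 4 * k + 2) / 2) / 2) / Real.Gamma ((τ + 4 * k + 2) / 2)) =
      x ^ k / (k.factorial : ℝ) := by
    field_simp
  rw [hval] at h
  refine h.congr fun γ => ?_
  rw [hcoef_eq]

lemma tendsto_G (hτ : -2 < τ) {M : ℝ} (hM : 0 ≤ M) :
    Filter.Tendsto (fun γ : ℝ => ∑' k : ℕ, hcoef M γ τ k) (nhdsWithin 0 (Ioi 0))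
      (nhds (Real.exp M)) := by
  rw [exp_tsum M]
  refine tendsto_tsum_of_dominated_convergence (Real.summable_pow_div_factorial M)
    (fun k => tendsto_hcoef hτ M k) ?_
  filter_upwards [self_mem_nhdsWithin] with γ hγ
  intro k
  rw [Real.norm_eq_abs]
  have := hcoef_abs_le hτ (le_of_lt hγ) M k
  rwa [abs_of_nonneg hM] at this

end Stmt15Aux

open Stmt15Aux in
theorem stmt_15 (τ : ℝ) (hτ : -2 < τ) (C : Set ℝ) (hC : IsCompact C) :
    TendstoUniformlyOn
      (fun (γ : ℝ) (x : ℝ) => ∑' k : ℕ, hcoef x γ τ k)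
      (fun x => Real.exp x) (nhdsWithin 0 (Ioi 0)) C := by
  rw [Metric.tendstoUniformlyOn_iff]
  intro ε hε
  obtain ⟨r, hr⟩ := hC.isBounded.subset_closedBall 0
  set M : ℝ := max r 0 with hMdef
  have hM : 0 ≤ M := le_max_right r 0
  have hxM : ∀ x ∈ C, |x| ≤ M := by
    intro x hx
    have := hr hx
    rw [Metric.mem_closedBall, Real.dist_eq, sub_zero] at this
    exact this.trans (le_max_left r 0)
  have hG := tendsto_G (τ := τ) hτ hM
  have hev : ∀ᶠ γ in nhdsWithin (0:ℝ) (Ioi 0),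
      Real.exp M - (∑' k : ℕ, hcoef M γ τ k) < ε := by
    have h0 : Filter.Tendsto (fun γ : ℝ => Real.exp M - ∑' k : ℕ, hcoef M γ τ k)
        (nhdsWithin 0 (Ioi 0)) (nhds (Real.exp M - Real.exp M)) :=
      Filter.Tendsto.sub tendsto_const_nhds hG
    rw [sub_self] at h0
    exact h0.eventually_lt_const hε
  filter_upwards [hev, self_mem_nhdsWithin] with γ hγε hγ0
  intro x hx
  have hγ : (0 : ℝ) ≤ γ := le_of_lt hγ0
  have hs1 : Summable (fun k : ℕ => x ^ k / (k.factorial : ℝ)) :=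
    Real.summable_pow_div_factorial x
  have hs2 : Summable (fun k => hcoef x γ τ k) := summable_hcoef hτ hγ x
  have hs1M : Summable (fun k : ℕ => M ^ k / (k.factorial : ℝ)) :=
    Real.summable_pow_div_factorial M
  have hs2M : Summable (fun k => hcoef M γ τ k) := summable_hcoef hτ hγ M
  rw [Real.dist_eq]
  calc |Real.exp x - ∑' k : ℕ, hcoef x γ τ k|
      = |∑' k : ℕ, (x ^ k / (k.factorial : ℝ) - hcoef x γ τ k)| := by
        rw [exp_tsum x, Summable.tsum_sub hs1 hs2]
    _ ≤ ∑' k : ℕ, |x ^ k / (k.factorial : ℝ) - hcoef x γ τ k| := by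
        simpa [Real.norm_eq_abs] using norm_tsum_le_tsum_norm
          (f := fun k : ℕ => x ^ k / (k.factorial : ℝ) - hcoef x γ τ k)
          (by simpa [Real.norm_eq_abs] using (hs1.sub hs2).abs)
    _ ≤ ∑' k : ℕ, (M ^ k / (k.factorial : ℝ) - hcoef M γ τ k) := by
        refine Summable.tsum_le_tsum (fun k => key_bound hτ hγ hM (hxM x hx) k)
          ((hs1.sub hs2).abs) (hs1M.sub hs2M)
    _ = Real.exp M - ∑' k : ℕ, hcoef M γ τ k := by
        rw [Summable.tsum_sub hs1M hs2M, exp_tsum M]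
    _ < ε := hγε
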